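/- arXiv:math/0111197 — 6 statements merged into one kernel-verified Lean document; each statement's English description precedes it below -/
import Mathlib

section
/- A continuous section s : X × X → PX of the path fibration π : PX → X × X (where π(γ) = (γ(0), γ(1)) and PX is the space of continuous paths in X with the compact-open topology) exists if and only if X is contractible. -/
/-!
Fixing the endpoint `x₀` of a continuous motion planner `s` gives a contraction
`(t, x) ↦ s (x, x₀) t` of `X` onto `x₀`. Conversely, a contraction `H` traces a path from each
`x` to `x₀`, depending continuously on `x`, and `(A, B) ↦ H(·, A) ⬝ H(·, B)⁻¹` is a continuous
motion planner.
-/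

open Set unitInterval

/-- `U ⊆ X × X` admits a continuous motion planning rule: a continuous section over `U`
of the path fibration `π : PX → X × X`, `π(γ) = (γ(0), γ(1))`, where `PX = C(I, X)`
carries the compact-open topology. -/
def HasMotionPlanner (X : Type*) [TopologicalSpace X] (U : Set (X × X)) : Prop :=
  ∃ s : C(U, C(I, X)), ∀ p : U, (s p) 0 = (p : X × X).1 ∧ (s p) 1 = (p : X × X).2

namespace ContinuousMap

variable {X : Type*} [TopologicalSpace X]

theorem nullhomotopic_id_of_pathSection (s : C(X × X, C(I, X)))
    (hs : ∀ A B : X, s (A, B) 0 = A ∧ s (A, B) 1 = B) (x₀ : X) :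
    (ContinuousMap.id X).Nullhomotopic :=
  ⟨x₀, ⟨{ toFun := fun p => s (p.2, x₀) p.1
          continuous_toFun := by fun_prop
          map_zero_left := fun x => (hs x x₀).1
          map_one_left := fun x => (hs x x₀).2 }⟩⟩

theorem Homotopy.exists_pathSection {x₀ : X} (H : (ContinuousMap.id X).Homotopy (const X x₀)) :
    ∃ s : C(X × X, C(I, X)), ∀ A B : X, s (A, B) 0 = A ∧ s (A, B) 1 = B := by
  let γ : ∀ p : X × X, Path p.1 p.2 := fun p => (H.evalAt p.1).trans (H.evalAt p.2).symm
  have hγ : Continuous ↿γ :=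
    Path.trans_continuous_family _
      (H.continuous.comp (continuous_snd.prodMk continuous_fst.fst)) _
      (Path.symm_continuous_family _
        (H.continuous.comp (continuous_snd.prodMk continuous_fst.snd)))
  exact ⟨⟨fun p => γ p, continuous_of_continuous_uncurry _ hγ⟩,
    fun A B => ⟨(γ (A, B)).source, (γ (A, B)).target⟩⟩

end ContinuousMap

/-- A continuous section `s : X × X → PX` of the path fibration (where `π(γ) = (γ(0), γ(1))`
and `PX` is the space of continuous paths in `X` with the compact-open topology) exists
if and only if `X` is contractible. -/
theorem stmt_0 (X : Type*) [TopologicalSpace X] [PathConnectedSpace X] :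
    (∃ s : C(X × X, C(I, X)), ∀ A B : X, (s (A, B)) 0 = A ∧ (s (A, B)) 1 = B) ↔
      ContractibleSpace X := by
  rw [contractible_iff_id_nullhomotopic]
  constructor
  · rintro ⟨s, hs⟩
    exact ContinuousMap.nullhomotopic_id_of_pathSection s hs (Classical.arbitrary X)
  · rintro ⟨x₀, ⟨H⟩⟩
    exact H.exists_pathSection
end

section
/- If X is contractible, then there exists a continuous map s : X × X → PX such that for all (A,B), s(A,B)(0) = A and s(A,B)(1) = B. -/
open Set unitInterval

/-- If `X` is contractible, then there exists a continuous map `s : X × X → PX`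
(where `PX = C(I, X)` with the compact-open topology) such that for all `(A, B)`,
`s(A,B)(0) = A` and `s(A,B)(1) = B`. -/
theorem stmt_1 (X : Type*) [TopologicalSpace X] (h : ContractibleSpace X) :
    ∃ s : C(X × X, C(I, X)), ∀ A B : X, (s (A, B)) 0 = A ∧ (s (A, B)) 1 = B := by
  obtain ⟨c, ⟨H⟩⟩ := id_nullhomotopic X
  set γ₁ : ∀ z : X × X, Path z.1 c := fun z =>
    ⟨⟨fun t => H (t, z.1), H.continuous.comp (continuous_id.prodMk continuous_const)⟩,
      H.apply_zero z.1, H.apply_one z.1⟩ with hγ₁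
  set γ₂ : ∀ z : X × X, Path c z.2 := fun z =>
    (⟨⟨fun t => H (t, z.2), H.continuous.comp (continuous_id.prodMk continuous_const)⟩,
      H.apply_zero z.2, H.apply_one z.2⟩ : Path z.2 c).symm with hγ₂
  have h₁ : Continuous ↿γ₁ := by
    exact H.continuous.comp (continuous_snd.prodMk (continuous_fst.fst))
  have h₂ : Continuous ↿γ₂ := by
    exact H.continuous.comp ((continuous_symm.comp continuous_snd).prodMk
      (continuous_fst.snd))
  have hc : Continuous ↿fun z => (γ₁ z).trans (γ₂ z) :=
    Path.trans_continuous_family γ₁ h₁ γ₂ h₂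
  refine ⟨ContinuousMap.curry ⟨_, hc⟩, fun A B => ?_⟩
  constructor
  · exact ((γ₁ (A, B)).trans (γ₂ (A, B))).source
  · exact ((γ₁ (A, B)).trans (γ₂ (A, B))).target
end

section
/- TC(X) depends only on the homotopy type of X: if X and Y are homotopy equivalent path-connected spaces, then TC(X) = TC(Y). -/
open Set unitInterval

/-- The topological complexity `TC(X)`: the minimal number `k` such that `X × X` can be
covered by `k` open subsets, each admitting a continuous motion planning rule; `∞` (`⊤`)
if no such `k` exists. -/
noncomputable def topologicalComplexity (X : Type*) [TopologicalSpace X] : ℕ∞ :=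
  sInf {k : ℕ∞ | ∃ n : ℕ, k = n ∧ ∃ U : Fin n → Set (X × X),
    (∀ i, IsOpen (U i)) ∧ (⋃ i, U i) = univ ∧ ∀ i, HasMotionPlanner X (U i)}

lemma planner_pullback {X Y : Type*} [TopologicalSpace X] [TopologicalSpace Y]
    (e : ContinuousMap.HomotopyEquiv X Y) (U : Set (Y × Y)) (hU : HasMotionPlanner Y U) :
    HasMotionPlanner X ((fun p : X × X => (e.toFun p.1, e.toFun p.2)) ⁻¹' U) := by
  obtain ⟨s, hs⟩ := hU
  obtain ⟨H⟩ := e.left_inv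
  set V := ((fun p : X × X => (e.toFun p.1, e.toFun p.2)) ⁻¹' U) with hV
  have hq : Continuous fun p : V =>
      (⟨(e.toFun (p : X × X).1, e.toFun (p : X × X).2), p.2⟩ : U) := by
    apply Continuous.subtype_mk
    exact ((map_continuous e.toFun).comp (continuous_fst.comp continuous_subtype_val)).prodMk
      ((map_continuous e.toFun).comp (continuous_snd.comp continuous_subtype_val))
  let q : C(V, U) := ⟨_, hq⟩
  let S : C(V × I, Y) := (s.comp q).uncurry
  let F : V × I → X := fun z =>
    if (z.2 : ℝ) ≤ 1/3 then H (projIcc 0 1 zero_le_one (1 - 3 * z.2), (z.1 : X × X).1)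
    else if (z.2 : ℝ) ≤ 2/3 then e.invFun (S (z.1, projIcc 0 1 zero_le_one (3 * z.2 - 1)))
    else H (projIcc 0 1 zero_le_one (3 * z.2 - 2), (z.1 : X × X).2)
  have c1 : Continuous fun z : V × I =>
      H (projIcc 0 1 zero_le_one (1 - 3 * (z.2 : ℝ)), (z.1 : X × X).1) := by
    apply H.continuous.comp
    apply Continuous.prodMk
    · exact continuous_projIcc.comp (by fun_prop)
    · fun_prop
  have c2 : Continuous fun z : V × I =>
      e.invFun (S (z.1, projIcc 0 1 zero_le_one (3 * (z.2 : ℝ) - 1))) := by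
    apply (map_continuous e.invFun).comp
    apply S.continuous.comp
    apply continuous_fst.prodMk
    exact continuous_projIcc.comp (by fun_prop)
  have c3 : Continuous fun z : V × I =>
      H (projIcc 0 1 zero_le_one (3 * (z.2 : ℝ) - 2), (z.1 : X × X).2) := by
    apply H.continuous.comp
    apply Continuous.prodMk
    · exact continuous_projIcc.comp (by fun_prop)
    · fun_prop
  have key1 : ∀ x : I, (x : ℝ) = 1 → projIcc (0:ℝ) 1 zero_le_one (x : ℝ) = 1 := by
    intro x hx; rw [hx]; simp [projIcc]
  have contF : Continuous F := by
    apply Continuous.if_le _ _ (by fun_prop) continuous_const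
    · rintro ⟨p, t⟩ ht
      simp only at ht ⊢
      have h1 : (1 : ℝ) - 3 * (t:ℝ) = 0 := by rw [ht]; ring
      have h2 : 3 * (t:ℝ) - 1 = 0 := by rw [ht]; ring
      have hle : (t:ℝ) ≤ 2/3 := by rw [ht]; norm_num
      rw [if_pos hle, h1, h2]
      have hz : projIcc (0:ℝ) 1 zero_le_one 0 = 0 := by simp [projIcc]
      rw [hz]
      have : S (p, 0) = s (q p) 0 := rfl
      rw [this, (hs (q p)).1]
      rw [H.apply_zero]; rfl
    · exact c1
    · apply Continuous.if_le c2 c3 (by fun_prop) continuous_const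
      rintro ⟨p, t⟩ ht
      simp only at ht ⊢
      have h1 : 3 * (t:ℝ) - 1 = 1 := by rw [ht]; ring
      have h2 : 3 * (t:ℝ) - 2 = 0 := by rw [ht]; ring
      rw [h1, h2]
      have ho : projIcc (0:ℝ) 1 zero_le_one 1 = 1 := by simp [projIcc]
      have hz : projIcc (0:ℝ) 1 zero_le_one 0 = 0 := by simp [projIcc]
      rw [ho, hz]
      have : S (p, 1) = s (q p) 1 := rfl
      rw [this, (hs (q p)).2]
      rw [H.apply_zero]; rfl
  refine ⟨ContinuousMap.curry ⟨F, contF⟩, ?_⟩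
  rintro p
  constructor
  · show F (p, 0) = _
    have : ((0 : I) : ℝ) ≤ 1/3 := by norm_num
    simp only [F, this, if_pos]
    have h1 : (1:ℝ) - 3 * ((0:I):ℝ) = 1 := by norm_num
    rw [h1]
    have ho : projIcc (0:ℝ) 1 zero_le_one 1 = 1 := by simp [projIcc]
    rw [ho]
    simpa using H.apply_one ((p : X × X).1)
  · show F (p, 1) = _
    have h1 : ¬ ((1 : I) : ℝ) ≤ 1/3 := by norm_num
    have h2 : ¬ ((1 : I) : ℝ) ≤ 2/3 := by norm_num
    simp only [F, h1, h2, if_neg, if_false]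
    have h3 : 3 * ((1:I):ℝ) - 2 = 1 := by norm_num
    rw [h3]
    have ho : projIcc (0:ℝ) 1 zero_le_one 1 = 1 := by simp [projIcc]
    rw [ho]
    simpa using H.apply_one ((p : X × X).2)

lemma tc_le {X Y : Type*} [TopologicalSpace X] [TopologicalSpace Y]
    (e : ContinuousMap.HomotopyEquiv X Y) :
    topologicalComplexity X ≤ topologicalComplexity Y := by
  apply sInf_le_sInf
  rintro k ⟨n, rfl, U, hopen, hcov, hpl⟩
  refine ⟨n, rfl, fun i => (fun p : X × X => (e.toFun p.1, e.toFun p.2)) ⁻¹' U i, ?_, ?_, ?_⟩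
  · intro i
    exact (hopen i).preimage (by fun_prop)
  · rw [← preimage_iUnion, hcov, preimage_univ]
  · intro i; exact planner_pullback e _ (hpl i)

/-- `TC(X)` depends only on the homotopy type of `X`: homotopy equivalent path-connected
spaces have equal topological complexity. -/
theorem stmt_4 {X Y : Type*} [TopologicalSpace X] [TopologicalSpace Y]
    [PathConnectedSpace X] [PathConnectedSpace Y]
    (h : Nonempty (ContinuousMap.HomotopyEquiv X Y)) :
    topologicalComplexity X = topologicalComplexity Y := by
  obtain ⟨e⟩ := h
  exact le_antisymm (tc_le e) (tc_le e.symm)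
end

section
/- For any path-connected paracompact space X, cat(X) ≤ TC(X), where cat denotes the Lusternik–Schnirelmann category. -/
open Set unitInterval

/-- The (unreduced) Lusternik–Schnirelmann category `cat(X)`: the smallest `k` such that
`X` can be covered by `k` open subsets, each of whose inclusion into `X` is
null-homotopic; `∞` (`⊤`) if no such `k` exists. -/
noncomputable def LScat (X : Type*) [TopologicalSpace X] : ℕ∞ :=
  sInf {k : ℕ∞ | ∃ n : ℕ, k = n ∧ ∃ V : Fin n → Set X,
    (∀ i, IsOpen (V i)) ∧ (⋃ i, V i) = univ ∧
    ∀ i, ∃ x₀ : X, ContinuousMap.Homotopic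
      ⟨fun x : V i => (x : X), continuous_subtype_val⟩ (ContinuousMap.const (V i) x₀)}

/-- For any path-connected paracompact space `X`, `cat(X) ≤ TC(X)`. -/
theorem stmt_5 (X : Type*) [TopologicalSpace X] [PathConnectedSpace X] [ParacompactSpace X] :
    LScat X ≤ topologicalComplexity X := by
  apply sInf_le_sInf
  rintro k ⟨n, rfl, U, hopen, hcov, hmp⟩
  obtain ⟨x₀⟩ := (inferInstance : Nonempty X)
  refine ⟨n, rfl, fun i => (fun x => (x, x₀)) ⁻¹' U i,
    fun i => (hopen i).preimage (by continuity), ?_, ?_⟩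
  · ext x
    simp only [mem_iUnion, mem_preimage, mem_univ, iff_true]
    have : (x, x₀) ∈ ⋃ i, U i := by rw [hcov]; trivial
    simpa using this
  · intro i
    obtain ⟨s, hs⟩ := hmp i
    refine ⟨x₀, ⟨?_⟩⟩
    have he : Continuous fun x : (fun x => (x, x₀)) ⁻¹' U i =>
        (⟨(x.1, x₀), x.2⟩ : U i) := by
      apply Continuous.subtype_mk
      exact (continuous_subtype_val.prodMk continuous_const)
    refine ⟨⟨fun p => s ⟨(p.2.1, x₀), p.2.2⟩ p.1, ?_⟩, ?_, ?_⟩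
    · exact ContinuousEval.continuous_eval.comp
        ((s.continuous.comp (he.comp continuous_snd)).prodMk continuous_fst)
    · intro x
      exact (hs ⟨(x.1, x₀), x.2⟩).1
    · intro x
      exact (hs ⟨(x.1, x₀), x.2⟩).2
end

section
/- TC(S¹) = 2: the circle admits a cover of S¹ × S¹ by two open sets each with a continuous motion planning, and no continuous motion planning exists on all of S¹ × S¹. -/
open Set unitInterval

/-!
Writing `y = x · exp(iθ)`, a continuous choice of the angle `θ` on `U ⊆ S¹ × S¹` gives a motion
planner on `U`: rotate `x` through `tθ`. A branch of `arg` gives such a choice wherever `y / x` avoids one point of the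
circle, so the sets `{y ≠ -x}` and `{y ≠ x}` carry planners. A planner on all of `S¹ × S¹` would
contract `S¹` to a point; lifting this contraction along the covering `exp : ℝ → S¹` would give a
continuous section of `exp`, and a continuous `g` with `exp ∘ g = id` makes `t ↦ g (exp t)` both
`2π`-periodic and equal to `t` plus a constant.
-/

open Complex

theorem topologicalComplexity_le_two {X : Type*} [TopologicalSpace X] {U₁ U₂ : Set (X × X)}
    (h₁ : IsOpen U₁) (h₂ : IsOpen U₂) (hcover : U₁ ∪ U₂ = univ)
    (hU₁ : HasMotionPlanner X U₁) (hU₂ : HasMotionPlanner X U₂) :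
    topologicalComplexity X ≤ 2 :=
  sInf_le ⟨2, rfl, ![U₁, U₂], Fin.forall_fin_two.2 ⟨h₁, h₂⟩,
    by rw [← hcover]; ext; simp [Fin.exists_fin_two], Fin.forall_fin_two.2 ⟨hU₁, hU₂⟩⟩

theorem two_le_topologicalComplexity {X : Type*} [TopologicalSpace X] [Nonempty X]
    (h : ¬ HasMotionPlanner X univ) : 2 ≤ topologicalComplexity X := by
  refine le_sInf ?_
  rintro _ ⟨n, rfl, U, -, hcover, hU⟩
  match n with
  | 0 => exact (empty_ne_univ (by simpa using hcover)).elim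
  | 1 => exact (h ((iSup_unique U).symm.trans hcover ▸ hU 0)).elim
  | n + 2 => exact_mod_cast Nat.le_add_left 2 n

theorem HasMotionPlanner.homotopic_const_id {X : Type*} [TopologicalSpace X]
    (h : HasMotionPlanner X univ) (x₀ : X) :
    (ContinuousMap.const X x₀).Homotopic (ContinuousMap.id X) := by
  obtain ⟨s, hs⟩ := h
  exact ⟨{ toFun := fun q => s ⟨(x₀, q.2), trivial⟩ q.1
           continuous_toFun := by fun_prop
           map_zero_left := fun x => (hs _).1
           map_one_left := fun x => (hs _).2 }⟩

theorem IsCoveringMap.exists_section_of_homotopic_const_id {E X : Type*} [TopologicalSpace E]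
    [TopologicalSpace X] {p : E → X} (hp : IsCoveringMap p) {e : E}
    (h : (ContinuousMap.const X (p e)).Homotopic (ContinuousMap.id X)) :
    ∃ g : C(X, E), p ∘ g = id := by
  obtain ⟨F⟩ := h
  have hF₀ : ∀ x, F (0, x) = p (ContinuousMap.const X e x) := F.apply_zero
  exact ⟨(hp.liftHomotopy F.toContinuousMap _ hF₀).curry 1, funext fun x =>
    (congr_fun (hp.liftHomotopy_lifts F.toContinuousMap _ hF₀) (1, x)).trans (F.apply_one x)⟩

namespace Circle

theorem coe_mem_slitPlane {z : Circle} (hz : z ≠ -1) : (z : ℂ) ∈ slitPlane :=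
  mem_slitPlane_iff_arg.2
    ⟨fun h => hz <| arg_eq_arg.1 <| by rwa [coe_neg, coe_one, arg_neg_one], z.coe_ne_zero⟩

theorem continuousAt_arg {z : Circle} (hz : z ≠ -1) : ContinuousAt (fun w : Circle => arg w) z :=
  (Complex.continuousAt_arg (coe_mem_slitPlane hz)).comp continuous_subtype_val.continuousAt

theorem hasMotionPlanner_of_mul_exp_eq {U : Set (Circle × Circle)} (φ : C(U, ℝ))
    (hφ : ∀ p : U, (p : Circle × Circle).1 * exp (φ p) = (p : Circle × Circle).2) :
    HasMotionPlanner Circle U := by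
  let path : C(U × I, Circle) :=
    ⟨fun q => (q.1 : Circle × Circle).1 * exp (q.2 * φ q.1), by fun_prop⟩
  exact ⟨path.curry, fun p => ⟨by simp [path], by simpa [path] using hφ p⟩⟩

theorem hasMotionPlanner_setOf_ne_neg_mul (w : Circle) :
    HasMotionPlanner Circle {p : Circle × Circle | p.2 ≠ -(w * p.1)} := by
  let φ : C({p : Circle × Circle | p.2 ≠ -(w * p.1)}, ℝ) :=
    ⟨fun p => arg (p.1.2 / p.1.1 / w : Circle) + arg w, by
      refine continuous_iff_continuousAt.2 fun p => ?_
      refine ContinuousAt.add ?_ continuousAt_const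
      refine (Circle.continuousAt_arg ?_).comp (by fun_prop)
      intro h
      apply p.2
      rw [div_div, div_eq_iff_eq_mul] at h
      simpa [mul_comm] using h⟩
  refine hasMotionPlanner_of_mul_exp_eq φ fun p => ?_
  simp only [φ, ContinuousMap.coe_mk, exp_add, exp_arg, div_mul_cancel,
    mul_div_cancel]

theorem exp_comp_ne_id (g : C(Circle, ℝ)) : exp ∘ g ≠ id := fun hg => by
  have hexp : ∀ z, exp (g z) = z := congr_fun hg
  -- Both `t ↦ g (exp t) - g 1` and `id` lift `exp` along the covering `exp`, and agree at `0`.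
  have hlift : (fun t => g (exp t) - g 1) = id :=
    isCoveringMap_exp.eq_of_comp_eq (by fun_prop) continuous_id
      (funext fun t => by simp [exp_sub, hexp]) 0 (by simp)
  have := congr_fun hlift (2 * Real.pi)
  simp only [exp_two_pi, sub_self, id_eq] at this
  linarith [Real.pi_pos]

theorem not_hasMotionPlanner_univ : ¬ HasMotionPlanner Circle univ := fun h => by
  obtain ⟨g, hg⟩ := isCoveringMap_exp.exists_section_of_homotopic_const_id (e := 0)
    (by simpa using h.homotopic_const_id 1)
  exact exp_comp_ne_id g hg

end Circle

/-- `TC(S¹) = 2`: the circle admits a cover of `S¹ × S¹` by two open sets each with a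
continuous motion planning, and no continuous motion planning exists on all of `S¹ × S¹`. -/
theorem stmt_9 :
    topologicalComplexity Circle = 2 ∧
    (∃ U₁ U₂ : Set (Circle × Circle), IsOpen U₁ ∧ IsOpen U₂ ∧ U₁ ∪ U₂ = univ ∧
      HasMotionPlanner Circle U₁ ∧ HasMotionPlanner Circle U₂) ∧
    ¬ HasMotionPlanner Circle univ := by
  have hopen₁ : IsOpen {p : Circle × Circle | p.2 ≠ -p.1} :=
    isOpen_ne_fun continuous_snd continuous_fst.neg
  have hopen₂ : IsOpen {p : Circle × Circle | p.2 ≠ p.1} :=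
    isOpen_ne_fun continuous_snd continuous_fst
  have hcover : {p : Circle × Circle | p.2 ≠ -p.1} ∪ {p | p.2 ≠ p.1} = univ :=
    eq_univ_of_forall fun p => by
      by_contra h
      simp only [mem_union, mem_ofPred_eq, not_or, not_not] at h
      exact p.1.neg_ne_self (h.1.symm.trans h.2)
  have hplan₁ : HasMotionPlanner Circle {p | p.2 ≠ -p.1} := by
    simpa using Circle.hasMotionPlanner_setOf_ne_neg_mul 1
  have hplan₂ : HasMotionPlanner Circle {p | p.2 ≠ p.1} := by
    simpa using Circle.hasMotionPlanner_setOf_ne_neg_mul (-1)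
  exact ⟨le_antisymm (topologicalComplexity_le_two hopen₁ hopen₂ hcover hplan₁ hplan₂)
      (two_le_topologicalComplexity Circle.not_hasMotionPlanner_univ),
    ⟨_, _, hopen₁, hopen₂, hcover, hplan₁, hplan₂⟩, Circle.not_hasMotionPlanner_univ⟩
end

section
/- For any path-connected metric spaces X and Y, TC(X × Y) ≤ TC(X) + TC(Y) − 1. -/
open Set unitInterval

theorem HasMotionPlanner.mono {X : Type*} [TopologicalSpace X] {U V : Set (X × X)}
    (h : HasMotionPlanner X U) (hVU : V ⊆ U) : HasMotionPlanner X V := by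
  obtain ⟨s, hs⟩ := h
  exact ⟨s.comp ⟨Set.inclusion hVU, continuous_inclusion hVU⟩,
    fun p => hs ⟨(p : X × X), hVU p.2⟩⟩

theorem HasMotionPlanner.prodMP {X Y : Type*} [TopologicalSpace X] [TopologicalSpace Y]
    {U : Set (X × X)} {V : Set (Y × Y)}
    (hU : HasMotionPlanner X U) (hV : HasMotionPlanner Y V) :
    HasMotionPlanner (X × Y)
      {p : (X × Y) × (X × Y) | (p.1.1, p.2.1) ∈ U ∧ (p.1.2, p.2.2) ∈ V} := by
  obtain ⟨sU, hsU⟩ := hU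
  obtain ⟨sV, hsV⟩ := hV
  set W : Set ((X × Y) × (X × Y)) :=
    {p : (X × Y) × (X × Y) | (p.1.1, p.2.1) ∈ U ∧ (p.1.2, p.2.2) ∈ V} with hW
  let a : W → U := fun p => ⟨((p : (X × Y) × (X × Y)).1.1, (p : (X × Y) × (X × Y)).2.1), p.2.1⟩
  let b : W → V := fun p => ⟨((p : (X × Y) × (X × Y)).1.2, (p : (X × Y) × (X × Y)).2.2), p.2.2⟩
  have ha : Continuous a := by
    apply Continuous.subtype_mk; fun_prop
  have hb : Continuous b := by
    apply Continuous.subtype_mk; fun_prop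
  have hc1 : Continuous fun q : W × I => (sU (a q.1)) q.2 :=
    ContinuousEval.continuous_eval.comp
      ((sU.continuous.comp (ha.comp continuous_fst)).prodMk continuous_snd)
  have hc2 : Continuous fun q : W × I => (sV (b q.1)) q.2 :=
    ContinuousEval.continuous_eval.comp
      ((sV.continuous.comp (hb.comp continuous_fst)).prodMk continuous_snd)
  refine ⟨ContinuousMap.curry ⟨fun q : W × I => ((sU (a q.1)) q.2, (sV (b q.1)) q.2),
    hc1.prodMk hc2⟩, fun p => ?_⟩
  constructor
  · show ((sU (a p)) 0, (sV (b p)) 0) = (p : (X × Y) × (X × Y)).1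
    rw [(hsU (a p)).1, (hsV (b p)).1]
  · show ((sU (a p)) 1, (sV (b p)) 1) = (p : (X × Y) × (X × Y)).2
    rw [(hsU (a p)).2, (hsV (b p)).2]

theorem hasMotionPlanner_iUnion {X : Type*} [TopologicalSpace X] {ι : Type*}
    {A : ι → Set (X × X)} (hopen : ∀ i, IsOpen (A i))
    (hdisj : ∀ i j, i ≠ j → Disjoint (A i) (A j))
    (hp : ∀ i, HasMotionPlanner X (A i)) : HasMotionPlanner X (⋃ i, A i) := by
  choose s hs using hp
  set W : Set (X × X) := ⋃ i, A i with hWdef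
  let S : ι → Set W := fun i => (Subtype.val : W → X × X) ⁻¹' (A i)
  let φ : ∀ i, C(S i, C(I, X)) := fun i =>
    (s i).comp ⟨fun p => ⟨(p : W), p.2⟩,
      Continuous.subtype_mk (continuous_subtype_val.comp continuous_subtype_val) _⟩
  have hφ : ∀ i j (x : W) (hxi : x ∈ S i) (hxj : x ∈ S j),
      φ i ⟨x, hxi⟩ = φ j ⟨x, hxj⟩ := by
    intro i j x hxi hxj
    rcases eq_or_ne i j with rfl | hij
    · rfl
    · exact absurd hxj (Set.disjoint_left.mp (hdisj i j hij) hxi)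
  have hS : ∀ x : W, ∃ i, S i ∈ nhds x := by
    intro x
    obtain ⟨i, hi⟩ := Set.mem_iUnion.mp x.2
    exact ⟨i, (((hopen i).preimage continuous_subtype_val).mem_nhds hi)⟩
  refine ⟨ContinuousMap.liftCover S φ hφ hS, fun p => ?_⟩
  obtain ⟨i, hi⟩ := Set.mem_iUnion.mp p.2
  have := ContinuousMap.liftCover_coe (S := S) (φ := φ) (hφ := hφ) (hS := hS)
    (i := i) ⟨p, hi⟩
  rw [show ((⟨p, hi⟩ : S i) : W) = p from rfl] at this
  rw [this]
  exact hs i ⟨(p : X × X), hi⟩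

/-- The combinatorial heart: from covers of `X × X` by `n` sets and `Y × Y` by `m` sets,
build a cover of `(X×Y) × (X×Y)` by `n + m - 1` sets. -/
theorem tc_aux {X Y : Type*} [MetricSpace X] [MetricSpace Y] {n m : ℕ}
    (U : Fin n → Set (X × X)) (hUo : ∀ i, IsOpen (U i)) (hUc : (⋃ i, U i) = univ)
    (hUp : ∀ i, HasMotionPlanner X (U i))
    (V : Fin m → Set (Y × Y)) (hVo : ∀ j, IsOpen (V j)) (hVc : (⋃ j, V j) = univ)
    (hVp : ∀ j, HasMotionPlanner Y (V j)) :
    ∃ W : Fin (n + m - 1) → Set ((X × Y) × (X × Y)),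
      (∀ k, IsOpen (W k)) ∧ (⋃ k, W k) = univ ∧ ∀ k, HasMotionPlanner (X × Y) (W k) := by
  obtain ⟨f, hf⟩ := PartitionOfUnity.exists_isSubordinate (s := (univ : Set (X × X)))
    isClosed_univ U hUo (by rw [hUc])
  obtain ⟨g, hg⟩ := PartitionOfUnity.exists_isSubordinate (s := (univ : Set (Y × Y)))
    isClosed_univ V hVo (by rw [hVc])
  -- the weight function and products
  set h : Fin n × Fin m → (X × X) × (Y × Y) → ℝ :=
    fun c z => f c.1 z.1 * g c.2 z.2 with hh_def
  have hcont : ∀ c, Continuous (h c) := fun c =>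
    (((f c.1).continuous).comp continuous_fst).mul (((g c.2).continuous).comp continuous_snd)
  set E : Fin n × Fin m → Set ((X × X) × (Y × Y)) := fun c =>
    {z | 0 < h c z ∧ ∀ c', c' ≠ c → c.1.val + c.2.val ≤ c'.1.val + c'.2.val → h c' z < h c z}
    with hE_def
  have hEopen : ∀ c, IsOpen (E c) := by
    intro c
    have : E c = {z | 0 < h c z} ∩ ⋂ c',
        {z | c' ≠ c → c.1.val + c.2.val ≤ c'.1.val + c'.2.val → h c' z < h c z} := by
      ext z
      simp only [hE_def, Set.mem_setOf_eq, Set.mem_inter_iff, Set.mem_iInter]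
    rw [this]
    refine (isOpen_lt continuous_const (hcont c)).inter (isOpen_iInter_of_finite fun c' => ?_)
    by_cases h1 : c' ≠ c ∧ c.1.val + c.2.val ≤ c'.1.val + c'.2.val
    · have : {z | c' ≠ c → c.1.val + c.2.val ≤ c'.1.val + c'.2.val → h c' z < h c z}
          = {z | h c' z < h c z} := by
        ext z; simp only [Set.mem_setOf_eq]
        constructor
        · intro hz; exact hz h1.1 h1.2
        · intro hz _ _; exact hz
      rw [this]; exact isOpen_lt (hcont c') (hcont c)
    · have : {z | c' ≠ c → c.1.val + c.2.val ≤ c'.1.val + c'.2.val → h c' z < h c z}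
          = univ := by
        ext z; simp only [Set.mem_setOf_eq, Set.mem_univ, iff_true]
        intro h2 h3; exact absurd ⟨h2, h3⟩ h1
      rw [this]; exact isOpen_univ
  -- E c lands in U × V
  have hEsub : ∀ c, E c ⊆ (U c.1) ×ˢ (V c.2) := by
    intro c z hz
    have hz1 : 0 < f c.1 z.1 * g c.2 z.2 := hz.1
    have hf0 : 0 < f c.1 z.1 := by
      rcases (f.nonneg c.1 z.1).lt_or_eq with h' | h'
      · exact h'
      · rw [← h'] at hz1; simp at hz1
    have hg0 : 0 < g c.2 z.2 := by
      rcases (g.nonneg c.2 z.2).lt_or_eq with h' | h'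
      · exact h'
      · rw [← h'] at hz1; simp at hz1
    exact ⟨hf c.1 (subset_tsupport _ hf0.ne'), hg c.2 (subset_tsupport _ hg0.ne')⟩
  -- disjointness within a fixed weight
  have hEdisj : ∀ c c', c ≠ c' → c.1.val + c.2.val = c'.1.val + c'.2.val →
      Disjoint (E c) (E c') := by
    intro c c' hne hw
    rw [Set.disjoint_left]
    intro z hz hz'
    have h1 := hz.2 c' (Ne.symm hne) (le_of_eq hw)
    have h2 := hz'.2 c hne (le_of_eq hw.symm)
    exact absurd (h1.trans h2) (lt_irrefl _)
  -- covering
  have hEcov : ∀ z : (X × X) × (Y × Y), ∃ c, z ∈ E c := by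
    intro z
    set F : Fin n → ℝ := fun i => f i z.1 with hF
    set G : Fin m → ℝ := fun j => g j z.2 with hG
    have hFsum : ∑ i, F i = 1 := by
      rw [← finsum_eq_sum_of_fintype]; exact f.sum_eq_one (mem_univ z.1)
    have hGsum : ∑ j, G j = 1 := by
      rw [← finsum_eq_sum_of_fintype]; exact g.sum_eq_one (mem_univ z.2)
    have hFex : ∃ i, 0 < F i := by
      by_contra hcon
      push_neg at hcon
      have : ∑ i, F i = 0 := le_antisymm (Finset.sum_nonpos fun i _ => hcon i)
        (Finset.sum_nonneg fun i _ => f.nonneg i z.1)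
      rw [hFsum] at this; norm_num at this
    have hGex : ∃ j, 0 < G j := by
      by_contra hcon
      push_neg at hcon
      have : ∑ j, G j = 0 := le_antisymm (Finset.sum_nonpos fun j _ => hcon j)
        (Finset.sum_nonneg fun j _ => g.nonneg j z.2)
      rw [hGsum] at this; norm_num at this
    obtain ⟨i0, hi0⟩ := hFex
    obtain ⟨j0, hj0⟩ := hGex
    -- argmax sets
    obtain ⟨iM, -, hiM⟩ := Finset.exists_max_image Finset.univ F ⟨i0, Finset.mem_univ i0⟩
    obtain ⟨jM, -, hjM⟩ := Finset.exists_max_image Finset.univ G ⟨j0, Finset.mem_univ j0⟩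
    set sA : Finset (Fin n) := Finset.univ.filter (fun i => ∀ k, F k ≤ F i) with hsA
    set sB : Finset (Fin m) := Finset.univ.filter (fun j => ∀ k, G k ≤ G j) with hsB
    have hsAne : sA.Nonempty := by
      refine ⟨iM, ?_⟩
      simp only [hsA, Finset.mem_filter, Finset.mem_univ, true_and]
      exact fun k => hiM k (Finset.mem_univ k)
    have hsBne : sB.Nonempty := by
      refine ⟨jM, ?_⟩
      simp only [hsB, Finset.mem_filter, Finset.mem_univ, true_and]
      exact fun k => hjM k (Finset.mem_univ k)
    set a : Fin n := sA.max' hsAne with ha_def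
    set b : Fin m := sB.max' hsBne with hb_def
    have haA : ∀ k, F k ≤ F a := (Finset.mem_filter.mp (sA.max'_mem hsAne)).2
    have hbB : ∀ k, G k ≤ G b := (Finset.mem_filter.mp (sB.max'_mem hsBne)).2
    have haLe : ∀ i ∈ sA, i ≤ a := fun i hi => sA.le_max' i hi
    have hbLe : ∀ j ∈ sB, j ≤ b := fun j hj => sB.le_max' j hj
    have hFa : 0 < F a := lt_of_lt_of_le hi0 (haA i0)
    have hGb : 0 < G b := lt_of_lt_of_le hj0 (hbB j0)
    refine ⟨(a, b), ?_, ?_⟩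
    · exact mul_pos hFa hGb
    · intro c' hne hwt
      show F c'.1 * G c'.2 < F a * G b
      rcases (haA c'.1).lt_or_eq with hlt | heqF
      · calc F c'.1 * G c'.2 ≤ F c'.1 * G b :=
              mul_le_mul_of_nonneg_left (hbB c'.2) (f.nonneg c'.1 z.1)
          _ < F a * G b := mul_lt_mul_of_pos_right hlt hGb
      · rcases (hbB c'.2).lt_or_eq with hlt | heqG
        · calc F c'.1 * G c'.2 < F c'.1 * G b := by
                rw [heqF]; exact mul_lt_mul_of_pos_left hlt hFa
            _ = F a * G b := by rw [heqF]
        · exfalso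
          have hc1A : c'.1 ∈ sA := by
            simp only [hsA, Finset.mem_filter, Finset.mem_univ, true_and]
            intro k; rw [heqF]; exact haA k
          have hc2B : c'.2 ∈ sB := by
            simp only [hsB, Finset.mem_filter, Finset.mem_univ, true_and]
            intro k; rw [heqG]; exact hbB k
          have h1 : c'.1.val ≤ a.val := haLe c'.1 hc1A
          have h2 : c'.2.val ≤ b.val := hbLe c'.2 hc2B
          have hwt' : a.val + b.val ≤ c'.1.val + c'.2.val := hwt
          have h3 : c'.1.val = a.val ∧ c'.2.val = b.val := by omega
          exact hne (Prod.ext (Fin.ext h3.1) (Fin.ext h3.2))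
  -- the transfer map
  set π : (X × Y) × (X × Y) → (X × X) × (Y × Y) :=
    fun p => ((p.1.1, p.2.1), (p.1.2, p.2.2)) with hπ
  have hπc : Continuous π := by fun_prop
  refine ⟨fun k => ⋃ c : {c : Fin n × Fin m // c.1.val + c.2.val = k.val},
      π ⁻¹' (E c.1), ?_, ?_, ?_⟩
  · exact fun k => isOpen_iUnion fun c => (hEopen c.1).preimage hπc
  · rw [Set.eq_univ_iff_forall]
    intro p
    obtain ⟨c, hc⟩ := hEcov (π p)
    have hlt : c.1.val + c.2.val < n + m - 1 := by
      have h1 := c.1.isLt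
      have h2 := c.2.isLt
      omega
    refine Set.mem_iUnion.mpr ⟨⟨c.1.val + c.2.val, hlt⟩, ?_⟩
    exact Set.mem_iUnion.mpr ⟨⟨c, rfl⟩, hc⟩
  · intro k
    apply hasMotionPlanner_iUnion
    · exact fun c => (hEopen c.1).preimage hπc
    · intro c c' hne
      exact (hEdisj c.1 c'.1 (fun hcc => hne (Subtype.ext hcc)) (c.2.trans c'.2.symm)).preimage π
    · intro c
      refine HasMotionPlanner.mono (HasMotionPlanner.prodMP (hUp c.1.1) (hVp c.1.2)) ?_
      intro p hp
      have := hEsub c.1 hp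
      exact ⟨this.1, this.2⟩

/-- For any path-connected metric spaces `X` and `Y`,
`TC(X × Y) ≤ TC(X) + TC(Y) − 1`. -/
theorem stmt_18 (X Y : Type*) [MetricSpace X] [MetricSpace Y]
    [PathConnectedSpace X] [PathConnectedSpace Y] :
    topologicalComplexity (X × Y) ≤ topologicalComplexity X + topologicalComplexity Y - 1 := by
  rcases eq_or_ne (topologicalComplexity X) ⊤ with hX | hX
  · rw [hX]
    simp
  rcases eq_or_ne (topologicalComplexity Y) ⊤ with hY | hY
  · rw [hY]
    simp
  have hXne : {k : ℕ∞ | ∃ n : ℕ, k = n ∧ ∃ U : Fin n → Set (X × X),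
      (∀ i, IsOpen (U i)) ∧ (⋃ i, U i) = univ ∧ ∀ i, HasMotionPlanner X (U i)}.Nonempty := by
    by_contra hcon
    rw [Set.not_nonempty_iff_eq_empty] at hcon
    apply hX
    rw [topologicalComplexity, hcon, sInf_empty]
  have hYne : {k : ℕ∞ | ∃ n : ℕ, k = n ∧ ∃ U : Fin n → Set (Y × Y),
      (∀ i, IsOpen (U i)) ∧ (⋃ i, U i) = univ ∧ ∀ i, HasMotionPlanner Y (U i)}.Nonempty := by
    by_contra hcon
    rw [Set.not_nonempty_iff_eq_empty] at hcon
    apply hY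
    rw [topologicalComplexity, hcon, sInf_empty]
  have hXmem := csInf_mem hXne
  have hYmem := csInf_mem hYne
  obtain ⟨n, hn, U, hUo, hUc, hUp⟩ := hXmem
  obtain ⟨m, hm, V, hVo, hVc, hVp⟩ := hYmem
  obtain ⟨W, hWo, hWc, hWp⟩ := tc_aux U hUo hUc hUp V hVo hVc hVp
  have hle : topologicalComplexity (X × Y) ≤ ((n + m - 1 : ℕ) : ℕ∞) :=
    sInf_le ⟨n + m - 1, rfl, W, hWo, hWc, hWp⟩
  have hn' : topologicalComplexity X = (n : ℕ∞) := hn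
  have hm' : topologicalComplexity Y = (m : ℕ∞) := hm
  rw [hn', hm']
  refine hle.trans (le_of_eq ?_)
  rw [ENat.coe_sub, Nat.cast_add, Nat.cast_one]
end
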